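/- Set M_n = ⌈n^{1/(2p+d)}⌉ with p = d/2 + 1 and let a_{n,1},…,a_{n,M_n^d} be the centers of the partition of [0,1]^d into M_n^d cubes of side length 1/M_n (so each component of a_{n,j} lies in {1/(2M_n) + k/M_n : k ∈ {0,…,M_n−1}}). Let C_{n,1},…,C_{n,M_n^d} be independent random variables, each uniformly distributed on {−1,1}. Then for n sufficiently large, P{ there exists ω ∈ ℝ^d with |Σ_{j=1}^{M_n^d} C_{n,j}·e^{iω^T a_{n,j}}| > (log n)·M_n^{d/2} } ≤ c₄₂/n for a constant c₄₂ > 0 not depending on n. In particular, by periodicity (the value of e^{iω^T a_{n,j}} is unchanged if any component of ω is shifted by 4π·M_n), the supremum over ω ∈ ℝ^d can be reduced to ω ∈ [−2π·M_n, 2π·M_n]^d and then to a finite grid, and the bound follows from the union bound and Hoeffding's inequality. -/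

import Mathlib

open MeasureTheory ProbabilityTheory
open scoped ENNReal

noncomputable section

abbrev Evec (d : ℕ) := EuclideanSpace ℝ (Fin d)

/-- The smoothness exponent `p = d/2 + 1`. -/
def pexp (d : ℕ) : ℝ := (d : ℝ) / 2 + 1

/-- `M_n = ⌈n^{1/(2p+d)}⌉`. -/
def MnD (d n : ℕ) : ℕ := ⌈(n : ℝ) ^ ((1 : ℝ) / (2 * pexp d + d))⌉₊

/-- The centers `a_{n,j}` of the cubes of the partition of `[0,1]^d` into `M_n^d` cubes of
side length `1/M_n`, indexed by `v : Fin d → Fin M_n`. -/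
def cubeCenter (d n : ℕ) (v : Fin d → Fin (MnD d n)) : Evec d :=
  WithLp.toLp 2 (fun i => 1 / (2 * (MnD d n : ℝ)) + (v i : ℝ) / (MnD d n : ℝ))

/-!
Shifting a coordinate of `ω` by `4πM` moves every phase `ωᵀa_{n,j}` by a multiple of `2π`, so
it suffices to control the sum for `ω ∈ [0, 4πM)^d`, and since `|e^{ix} - e^{iy}| ≤ |x - y|`,
on a grid of `K^d` points of mesh `4πM/K` with `K` polynomial in `n`. At a grid point the real
and imaginary parts of the sum are weighted Rademacher sums, so by Hoeffding's inequality each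
exceeds `(log n) M^{d/2} / 4` in absolute value with probability at most `2 exp(-(log n)² / 32)`,
which beats the polynomial number of grid points.
-/

open Real Filter Set

section Rademacher

def rademacher : Measure ℝ := (2 : ℝ≥0∞)⁻¹ • (Measure.dirac (-1) + Measure.dirac 1)

lemma ae_mem_Icc_rademacher : ∀ᵐ x ∂rademacher, x ∈ Icc (-1 : ℝ) 1 := by
  simp [rademacher]

lemma integral_id_rademacher : ∫ x, x ∂rademacher = 0 := by
  rw [rademacher, integral_smul_measure, integral_add_measure (integrable_dirac (by simp))
    (integrable_dirac (by simp))]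
  simp

variable {Ω : Type*} [MeasurableSpace Ω] {μ : Measure Ω}

lemma ae_mem_Icc_of_map_eq_rademacher {X : Ω → ℝ} (hX : AEMeasurable X μ)
    (hlaw : μ.map X = rademacher) : ∀ᵐ ω ∂μ, X ω ∈ Icc (-1 : ℝ) 1 :=
  ae_of_ae_map hX (hlaw ▸ ae_mem_Icc_rademacher)

variable [IsProbabilityMeasure μ]

lemma hasSubgaussianMGF_const_mul_of_map_eq_rademacher {X : Ω → ℝ} (hX : AEMeasurable X μ)
    (hlaw : μ.map X = rademacher) {c : ℝ} (hc : |c| ≤ 1) :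
    HasSubgaussianMGF (fun ω ↦ c * X ω) 1 μ := by
  have hmem : ∀ᵐ ω ∂μ, c * X ω ∈ Icc (-1 : ℝ) 1 := by
    filter_upwards [ae_mem_Icc_of_map_eq_rademacher hX hlaw] with ω hω
    rw [mem_Icc, ← abs_le, abs_mul]
    exact mul_le_one₀ hc (abs_nonneg _) (abs_le.2 hω)
  have hmean : μ[fun ω ↦ c * X ω] = 0 := by
    have h := integral_map hX (aestronglyMeasurable_id (μ := μ.map X))
    simp only [hlaw, id, integral_id_rademacher] at h
    simp [integral_const_mul, ← h]
  convert hasSubgaussianMGF_of_mem_Icc_of_integral_eq_zero (hX.const_mul c) hmem hmean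
  ext; norm_num

variable {ι : Type*} [Fintype ι] {X : ι → Ω → ℝ}

lemma measureReal_sum_mul_ge_le (hX : ∀ i, AEMeasurable (X i) μ) (hindep : iIndepFun X μ)
    (hlaw : ∀ i, μ.map (X i) = rademacher) {c : ι → ℝ} (hc : ∀ i, |c i| ≤ 1) {s : ℝ}
    (hs : 0 ≤ s) :
    μ.real {ω | s ≤ ∑ i, c i * X i ω} ≤ exp (-s ^ 2 / (2 * Fintype.card ι)) := by
  have h := HasSubgaussianMGF.measure_sum_ge_le_of_iIndepFun
    (hindep.comp (fun i x ↦ c i * x) fun i ↦ measurable_const_mul (c i)) (c := fun _ ↦ 1)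
    (s := Finset.univ) (fun i _ ↦ hasSubgaussianMGF_const_mul_of_map_eq_rademacher
      (hX i) (hlaw i) (hc i)) hs
  simpa using h

lemma measureReal_abs_sum_mul_ge_le (hX : ∀ i, AEMeasurable (X i) μ) (hindep : iIndepFun X μ)
    (hlaw : ∀ i, μ.map (X i) = rademacher) {c : ι → ℝ} (hc : ∀ i, |c i| ≤ 1) {s : ℝ}
    (hs : 0 ≤ s) :
    μ.real {ω | s ≤ |∑ i, c i * X i ω|} ≤ 2 * exp (-s ^ 2 / (2 * Fintype.card ι)) := by
  have hsub : {ω | s ≤ |∑ i, c i * X i ω|}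
      ⊆ {ω | s ≤ ∑ i, c i * X i ω} ∪ {ω | s ≤ ∑ i, -c i * X i ω} := by
    intro ω hω
    simpa [le_abs, neg_mul, Finset.sum_neg_distrib] using hω
  refine (measureReal_mono hsub).trans ((measureReal_union_le _ _).trans ?_)
  linarith [measureReal_sum_mul_ge_le hX hindep hlaw hc hs,
    measureReal_sum_mul_ge_le hX hindep hlaw (c := fun i ↦ -c i)
      (fun i ↦ (abs_neg (c i)).trans_le (hc i)) hs]

lemma measureReal_norm_sum_mul_exp_ge_le (hX : ∀ i, AEMeasurable (X i) μ)
    (hindep : iIndepFun X μ) (hlaw : ∀ i, μ.map (X i) = rademacher) (θ : ι → ℝ) {s : ℝ}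
    (hs : 0 ≤ s) :
    μ.real {ω | 2 * s ≤ ‖∑ i, (X i ω : ℂ) * Complex.exp (Complex.I * θ i)‖}
      ≤ 4 * exp (-s ^ 2 / (2 * Fintype.card ι)) := by
  have hre (ω : Ω) : (∑ i, (X i ω : ℂ) * Complex.exp (Complex.I * θ i)).re
      = ∑ i, cos (θ i) * X i ω := by
    simp only [Complex.re_sum, Complex.re_ofReal_mul, mul_comm Complex.I,
      Complex.exp_ofReal_mul_I_re]
    exact Finset.sum_congr rfl fun i _ ↦ mul_comm _ _
  have him (ω : Ω) : (∑ i, (X i ω : ℂ) * Complex.exp (Complex.I * θ i)).im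
      = ∑ i, sin (θ i) * X i ω := by
    simp only [Complex.im_sum, Complex.im_ofReal_mul, mul_comm Complex.I,
      Complex.exp_ofReal_mul_I_im]
    exact Finset.sum_congr rfl fun i _ ↦ mul_comm _ _
  have hsub : {ω | 2 * s ≤ ‖∑ i, (X i ω : ℂ) * Complex.exp (Complex.I * θ i)‖}
      ⊆ {ω | s ≤ |∑ i, cos (θ i) * X i ω|} ∪ {ω | s ≤ |∑ i, sin (θ i) * X i ω|} := by
    intro ω hω
    have hnorm := Complex.norm_le_abs_re_add_abs_im
      (∑ i, (X i ω : ℂ) * Complex.exp (Complex.I * θ i))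
    rw [hre, him] at hnorm
    by_contra! h
    simp only [mem_union, mem_ofPred_eq, not_or, not_le] at h hω
    linarith
  refine (measureReal_mono hsub).trans ((measureReal_union_le _ _).trans ?_)
  linarith [measureReal_abs_sum_mul_ge_le hX hindep hlaw (fun i ↦ abs_cos_le_one (θ i)) hs,
    measureReal_abs_sum_mul_ge_le hX hindep hlaw (fun i ↦ abs_sin_le_one (θ i)) hs]

end Rademacher

lemma norm_exp_I_mul_sub_exp_I_mul_le (x y : ℝ) :
    ‖Complex.exp (Complex.I * x) - Complex.exp (Complex.I * y)‖ ≤ |x - y| := by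
  have h : Complex.exp (Complex.I * x) - Complex.exp (Complex.I * y)
      = Complex.exp (Complex.I * y) * (Complex.exp (Complex.I * ↑(x - y)) - 1) := by
    rw [mul_sub, ← Complex.exp_add]
    push_cast
    ring_nf
  rw [h, norm_mul, Complex.norm_exp_I_mul_ofReal, one_mul, ← Real.norm_eq_abs]
  exact Real.norm_exp_I_mul_ofReal_sub_one_le

lemma norm_sum_mul_sub_sum_mul_le {ι : Type*} [Fintype ι] {r : ι → ℝ} (hr : ∀ i, |r i| ≤ 1)
    {z z' : ι → ℂ} {δ : ℝ} (h : ∀ i, ‖z i - z' i‖ ≤ δ) :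
    ‖∑ i, (r i : ℂ) * z i - ∑ i, (r i : ℂ) * z' i‖ ≤ Fintype.card ι * δ := by
  rw [← Finset.sum_sub_distrib]
  refine (norm_sum_le _ _).trans ?_
  calc ∑ i, ‖(r i : ℂ) * z i - (r i : ℂ) * z' i‖ ≤ ∑ _i : ι, δ := by
        refine Finset.sum_le_sum fun i _ ↦ ?_
        rw [← mul_sub, norm_mul, Complex.norm_real, Real.norm_eq_abs]
        exact (mul_le_of_le_one_left (norm_nonneg _) (hr i)).trans (h i)
    _ = Fintype.card ι * δ := by simp

lemma exists_int_fin_abs_sub_le {P : ℝ} (hP : 0 < P) {K : ℕ} (hK : 0 < K) (x : ℝ) :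
    ∃ (z : ℤ) (j : Fin K), |x - z * P - P * j / K| ≤ P / K := by
  set y := toIcoMod hP 0 x
  obtain ⟨hy0, hyP⟩ := toIcoMod_mem_Ico' hP x
  have hKpos : (0 : ℝ) < K := Nat.cast_pos.2 hK
  have hyK : 0 ≤ y * K / P := by positivity
  have hj : ⌊y * K / P⌋₊ < K := by
    rw [Nat.floor_lt hyK, div_lt_iff₀ hP]
    nlinarith
  refine ⟨toIcoDiv hP 0 x, ⟨_, hj⟩, ?_⟩
  have hxy : x - toIcoDiv hP 0 x * P = y := by
    rw [← zsmul_eq_mul, ← self_sub_toIcoMod, sub_sub_cancel]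
  have h1 := Nat.floor_le hyK
  have h2 := Nat.lt_floor_add_one (y * K / P)
  rw [le_div_iff₀ hP] at h1
  rw [div_lt_iff₀ hP] at h2
  rw [hxy, show y - P * (⌊y * K / P⌋₊ : ℕ) / K = (y * K - ⌊y * K / P⌋₊ * P) / K by
    field_simp, abs_div, abs_of_pos hKpos, div_le_div_iff_of_pos_right hKpos, abs_le]
  constructor <;> nlinarith

section CubeCenter
variable {d n : ℕ}

lemma cubeCenter_apply_mem_Icc (v : Fin d → Fin (MnD d n)) (i : Fin d) :
    cubeCenter d n v i ∈ Icc (0 : ℝ) 1 := by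
  have hM : (0 : ℝ) < MnD d n := Nat.cast_pos.2 (v i).pos
  have hv : ((v i : ℕ) : ℝ) + 1 ≤ MnD d n := by exact_mod_cast (v i).isLt
  simp only [cubeCenter, mem_Icc]
  constructor
  · positivity
  · rw [div_add_div _ _ (by positivity) hM.ne', div_le_one (by positivity)]
    nlinarith

lemma abs_inner_cubeCenter_le {x : Evec d} {ε : ℝ} (hx : ∀ i, |x i| ≤ ε)
    (v : Fin d → Fin (MnD d n)) : |inner ℝ x (cubeCenter d n v)| ≤ d * ε := by
  rw [PiLp.inner_apply]
  refine (Finset.abs_sum_le_sum_abs _ _).trans ?_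
  calc ∑ i, |inner ℝ (x i) (cubeCenter d n v i)| ≤ ∑ _i : Fin d, ε := by
        refine Finset.sum_le_sum fun i _ ↦ ?_
        obtain ⟨h0, h1⟩ := cubeCenter_apply_mem_Icc v i
        rw [Real.inner_apply, abs_mul, abs_of_nonneg h0]
        exact (mul_le_mul_of_nonneg_right (hx i) h0).trans
          (mul_le_of_le_one_right ((abs_nonneg _).trans (hx i)) h1)
    _ = d * ε := by simp

-- Each coordinate of `cubeCenter` is an odd multiple of `1 / (2 M)`, so this shift moves the
-- phase by a multiple of `2π`.
lemma exp_I_mul_inner_sub_period_cubeCenter (w : Evec d) (z : Fin d → ℤ)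
    (v : Fin d → Fin (MnD d n)) :
    Complex.exp (Complex.I * inner ℝ (w - WithLp.toLp 2 fun i ↦ z i * (4 * π * MnD d n))
      (cubeCenter d n v)) = Complex.exp (Complex.I * inner ℝ w (cubeCenter d n v)) := by
  obtain ⟨m, hm⟩ : ∃ m : ℤ, inner ℝ (WithLp.toLp 2 fun i ↦ z i * (4 * π * MnD d n) : Evec d)
      (cubeCenter d n v) = m * (2 * π) := by
    refine ⟨∑ i, z i * (2 * v i + 1), ?_⟩
    rw [PiLp.inner_apply, Int.cast_sum, Finset.sum_mul]
    refine Finset.sum_congr rfl fun i _ ↦ ?_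
    have hM : (MnD d n : ℝ) ≠ 0 := Nat.cast_ne_zero.2 (v i).pos.ne'
    simp only [cubeCenter, Real.inner_apply]
    push_cast
    field_simp
    ring
  rw [inner_sub_left, hm, Complex.ofReal_sub, mul_sub, Complex.exp_sub,
    show Complex.I * ((m * (2 * π) : ℝ) : ℂ) = m * (2 * π * Complex.I) by push_cast; ring,
    Complex.exp_int_mul_two_pi_mul_I, div_one]

def gridPoint (d n K : ℕ) (k : Fin d → Fin K) : Evec d :=
  WithLp.toLp 2 fun i ↦ 4 * π * MnD d n * k i / K

lemma exists_gridPoint_norm_exp_sub_le (hM : 0 < MnD d n) {K : ℕ} (hK : 0 < K) (w : Evec d) :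
    ∃ k : Fin d → Fin K, ∀ v, ‖Complex.exp (Complex.I * inner ℝ w (cubeCenter d n v))
      - Complex.exp (Complex.I * inner ℝ (gridPoint d n K k) (cubeCenter d n v))‖
        ≤ d * (4 * π * MnD d n / K) := by
  have hP : 0 < 4 * π * MnD d n := by positivity
  choose z k hzk using fun i ↦ exists_int_fin_abs_sub_le hP hK (w i)
  refine ⟨k, fun v ↦ ?_⟩
  rw [← exp_I_mul_inner_sub_period_cubeCenter w z v]
  refine (norm_exp_I_mul_sub_exp_I_mul_le _ _).trans ?_
  rw [← inner_sub_left]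
  exact abs_inner_cubeCenter_le (fun i ↦ by simpa [gridPoint, sub_sub] using hzk i) v

end CubeCenter

def cubeExpSum (d n : ℕ) (r : (Fin d → Fin (MnD d n)) → ℝ) (w : Evec d) : ℂ :=
  ∑ v, (r v : ℂ) * Complex.exp (Complex.I * inner ℝ w (cubeCenter d n v))

lemma measureReal_exists_norm_cubeExpSum_gt_le {Ω : Type*} [MeasurableSpace Ω]
    {μ : Measure Ω} [IsProbabilityMeasure μ] {d n K : ℕ} (hM : 0 < MnD d n) (hK : 0 < K)
    {t : ℝ} (hmesh : (MnD d n : ℝ) ^ d * (d * (4 * π * MnD d n / K)) ≤ t / 2)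
    {C : (Fin d → Fin (MnD d n)) → Ω → ℝ} (hC : ∀ v, AEMeasurable (C v) μ)
    (hindep : iIndepFun C μ) (hlaw : ∀ v, μ.map (C v) = rademacher) :
    μ.real {ω | ∃ w, t < ‖cubeExpSum d n (C · ω) w‖}
      ≤ K ^ d * (4 * exp (-(t / 4) ^ 2 / (2 * (MnD d n : ℝ) ^ d))) := by
  have ht : 0 ≤ t / 4 := by
    have : (0 : ℝ) ≤ (MnD d n : ℝ) ^ d * (d * (4 * π * MnD d n / K)) := by positivity
    linarith
  calc _ ≤ μ.real (⋃ k : Fin d → Fin K,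
        {ω | 2 * (t / 4) ≤ ‖cubeExpSum d n (C · ω) (gridPoint d n K k)‖}) := by
        refine ENNReal.toReal_mono (measure_ne_top _ _) (measure_mono_ae ?_)
        filter_upwards [ae_all_iff.2 fun v ↦ ae_mem_Icc_of_map_eq_rademacher (hC v) (hlaw v)]
          with ω hω ⟨w, hw⟩
        obtain ⟨k, hk⟩ := exists_gridPoint_norm_exp_sub_le hM hK w
        have hclose : ‖cubeExpSum d n (C · ω) w - cubeExpSum d n (C · ω) (gridPoint d n K k)‖
            ≤ (MnD d n : ℝ) ^ d * (d * (4 * π * MnD d n / K)) := by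
          simpa [cubeExpSum] using norm_sum_mul_sub_sum_mul_le (fun v ↦ abs_le.2 (hω v)) hk
        refine mem_iUnion.2 ⟨k, ?_⟩
        rw [mem_ofPred_eq]
        linarith [norm_sub_norm_le (cubeExpSum d n (C · ω) w)
          (cubeExpSum d n (C · ω) (gridPoint d n K k))]
    _ ≤ ∑ k : Fin d → Fin K,
        μ.real {ω | 2 * (t / 4) ≤ ‖cubeExpSum d n (C · ω) (gridPoint d n K k)‖} :=
      measureReal_iUnion_fintype_le _
    _ ≤ ∑ _k : Fin d → Fin K, 4 * exp (-(t / 4) ^ 2 / (2 * (MnD d n : ℝ) ^ d)) := by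
        refine Finset.sum_le_sum fun k _ ↦ ?_
        simpa [cubeExpSum] using measureReal_norm_sum_mul_exp_ge_le hC hindep hlaw _ ht
    _ = K ^ d * (4 * exp (-(t / 4) ^ 2 / (2 * (MnD d n : ℝ) ^ d))) := by simp

lemma eventually_mul_pow_mul_exp_neg_log_sq_le {A : ℝ} (hA : 0 < A) (k : ℕ) {c : ℝ}
    (hc : 0 < c) : ∀ᶠ n : ℕ in atTop, A * n ^ k * exp (-log n ^ 2 / c) ≤ 1 / n := by
  have hlog : Tendsto (fun n : ℕ ↦ log n) atTop atTop :=
    tendsto_log_atTop.comp tendsto_natCast_atTop_atTop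
  filter_upwards [hlog.eventually_ge_atTop (max 1 (c * (k + 1 + |log A|))),
    eventually_gt_atTop 0] with n hL hn
  have hn' : (0 : ℝ) < n := Nat.cast_pos.2 hn
  obtain ⟨hL1, hL2⟩ := max_le_iff.1 hL
  have hquad : log A + (k + 1) * log n ≤ log n ^ 2 / c := by
    rw [le_div_iff₀ hc]
    nlinarith [mul_le_mul_of_nonneg_right hL2 (by positivity : (0 : ℝ) ≤ log n),
      mul_nonneg (mul_nonneg hc.le (abs_nonneg (log A))) (sub_nonneg.2 hL1), le_abs_self (log A)]
  calc A * n ^ k * exp (-log n ^ 2 / c) = exp (log A + k * log n - log n ^ 2 / c) := by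
        rw [exp_sub, exp_add, exp_log hA, exp_nat_mul, exp_log hn', neg_div, exp_neg]
        ring
    _ ≤ exp (-log n) := exp_le_exp.2 (by linarith)
    _ = 1 / n := by rw [exp_neg, exp_log hn', one_div]

lemma MnD_pos {d n : ℕ} (hn : 0 < n) : 0 < MnD d n :=
  Nat.ceil_pos.2 (rpow_pos_of_pos (Nat.cast_pos.2 hn) _)

lemma MnD_le_self {d n : ℕ} (hn : 0 < n) : MnD d n ≤ n := by
  refine Nat.ceil_le.2 (rpow_le_self_of_one_le (Nat.one_le_cast.2 hn) ?_)
  rw [pexp, div_le_one (by positivity)]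
  linarith [(Nat.cast_nonneg d : (0 : ℝ) ≤ d)]

lemma measureReal_exists_norm_cubeExpSum_gt_log_le {Ω : Type*} [MeasurableSpace Ω] {μ : Measure Ω}
    [IsProbabilityMeasure μ] {d n : ℕ} (hn : 3 ≤ n) {C : (Fin d → Fin (MnD d n)) → Ω → ℝ}
    (hC : ∀ v, AEMeasurable (C v) μ) (hindep : iIndepFun C μ)
    (hlaw : ∀ v, μ.map (C v) = rademacher) :
    μ.real {ω | ∃ w, log n * (MnD d n : ℝ) ^ ((d : ℝ) / 2) < ‖cubeExpSum d n (C · ω) w‖}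
      ≤ 4 * (32 * (d + 1)) ^ d * n ^ (d * (d + 1)) * exp (-log n ^ 2 / 32) := by
  have hM : 0 < MnD d n := MnD_pos (by omega)
  have hM1 : (1 : ℝ) ≤ MnD d n := Nat.one_le_cast.2 hM
  have hMn : (MnD d n : ℝ) ≤ n := Nat.cast_le.2 (MnD_le_self (by omega))
  have hlog : 1 ≤ log n := by
    rw [le_log_iff_exp_le (by positivity)]
    exact (exp_one_lt_three.trans_le (by exact_mod_cast hn)).le
  have hsqrt : 1 ≤ (MnD d n : ℝ) ^ ((d : ℝ) / 2) := one_le_rpow hM1 (by positivity)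
  set K := 32 * (d + 1) * n ^ (d + 1)
  have hK : 0 < K := by positivity
  have hmesh : (MnD d n : ℝ) ^ d * (d * (4 * π * MnD d n / K)) ≤
      log n * (MnD d n : ℝ) ^ ((d : ℝ) / 2) / 2 := by
    have hMd : (MnD d n : ℝ) ^ d * MnD d n ≤ (n : ℝ) ^ (d + 1) := by
      rw [pow_succ]
      gcongr
    calc (MnD d n : ℝ) ^ d * (d * (4 * π * MnD d n / K))
        = 4 * π * d * ((MnD d n : ℝ) ^ d * MnD d n) / K := by ring
      _ ≤ 4 * 4 * (d + 1) * (n : ℝ) ^ (d + 1) / K := by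
        gcongr
        · exact pi_le_four
        · linarith
      _ = 1 / 2 := by
        push_cast [K]
        field_simp
        ring
      _ ≤ log n * (MnD d n : ℝ) ^ ((d : ℝ) / 2) / 2 := by nlinarith
  have hexponent : (log n * (MnD d n : ℝ) ^ ((d : ℝ) / 2) / 4) ^ 2 / (2 * (MnD d n : ℝ) ^ d)
      = log n ^ 2 / 32 := by
    have hsq : ((MnD d n : ℝ) ^ ((d : ℝ) / 2)) ^ 2 = (MnD d n : ℝ) ^ d := by
      rw [← rpow_mul_natCast (by positivity), Nat.cast_ofNat, div_mul_cancel₀ _ two_ne_zero,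
        rpow_natCast]
    rw [div_pow, mul_pow, hsq]
    field_simp
    norm_num
  refine (measureReal_exists_norm_cubeExpSum_gt_le hM hK hmesh hC hindep hlaw).trans_eq ?_
  simp only [neg_div, hexponent]
  push_cast [K, mul_pow, ← pow_mul]
  ring

theorem statement19_general (d : ℕ) :
    ∃ c42 : ℝ, 0 < c42 ∧ ∃ N : ℕ, ∀ n : ℕ, N ≤ n →
      ∀ (Ω : Type) (_ : MeasurableSpace Ω) (μ : Measure Ω), IsProbabilityMeasure μ →
      ∀ C : (Fin d → Fin (MnD d n)) → Ω → ℝ,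
        (∀ v, Measurable (C v)) →
        iIndepFun (fun v => C v) μ →
        (∀ v, Measure.map (C v) μ
            = (2 : ℝ≥0∞)⁻¹ • (Measure.dirac (-1 : ℝ) + Measure.dirac (1 : ℝ))) →
        μ {ω : Ω | ∃ w : Evec d,
            Real.log n * (MnD d n : ℝ) ^ ((d : ℝ) / 2) <
              ‖(∑ v : Fin d → Fin (MnD d n),
                ((C v ω : ℝ) : ℂ) *
                  Complex.exp (Complex.I * ((inner ℝ w (cubeCenter d n v) : ℝ) : ℂ)))‖}
          ≤ ENNReal.ofReal (c42 / n) := by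
  obtain ⟨N, hN⟩ := eventually_atTop.1 <|
    (eventually_mul_pow_mul_exp_neg_log_sq_le (by positivity : (0 : ℝ) < 4 * (32 * (d + 1)) ^ d)
      (d * (d + 1)) (by norm_num : (0 : ℝ) < 32)).and (eventually_ge_atTop 3)
  refine ⟨1, one_pos, N, fun n hn Ω _ μ _ C hC hindep hlaw ↦ ?_⟩
  rw [ENNReal.le_ofReal_iff_toReal_le (measure_ne_top _ _) (by positivity)]
  exact (measureReal_exists_norm_cubeExpSum_gt_log_le (hN n hn).2 (fun v ↦ (hC v).aemeasurable)
    hindep hlaw).trans (hN n hn).1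

/-- with i.i.d. Rademacher signs `C_{n,j}`, the probability that some
`ω ∈ ℝ^d` violates `|Σ_j C_{n,j} e^{iω^T a_{n,j}}| ≤ (log n) M_n^{d/2}` is at most `c₄₂/n`. -/
theorem statement19 (d : ℕ) (hd : 0 < d) :
    ∃ c42 : ℝ, 0 < c42 ∧ ∃ N : ℕ, ∀ n : ℕ, N ≤ n →
      ∀ (Ω : Type) (_ : MeasurableSpace Ω) (μ : Measure Ω), IsProbabilityMeasure μ →
      ∀ C : (Fin d → Fin (MnD d n)) → Ω → ℝ,
        (∀ v, Measurable (C v)) →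
        iIndepFun (fun v => C v) μ →
        (∀ v, Measure.map (C v) μ
            = (2 : ℝ≥0∞)⁻¹ • (Measure.dirac (-1 : ℝ) + Measure.dirac (1 : ℝ))) →
        μ {ω : Ω | ∃ w : Evec d,
            Real.log n * (MnD d n : ℝ) ^ ((d : ℝ) / 2) <
              ‖(∑ v : Fin d → Fin (MnD d n),
                ((C v ω : ℝ) : ℂ) *
                  Complex.exp (Complex.I * ((inner ℝ w (cubeCenter d n v) : ℝ) : ℂ)))‖}
          ≤ ENNReal.ofReal (c42 / n) :=
  statement19_general d

end
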